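/- arXiv:2507.17037 — 3 statements merged into one kernel-verified Lean document; each statement's English description precedes it below -/
import Mathlib

section
/- Let ℓ, ℓ̃ be edge lengths given by a Euclidean discrete conformal structure: ℓ² = α_v e^{2f(v)} + α_w e^{2f(w)} + 2η e^{f(v)+f(w)} and ℓ̃² = α_v e^{2f̃(v)} + α_w e^{2f̃(w)} + 2η e^{f̃(v)+f̃(w)}. Set H(v) = e^{f̃(v)}/e^{f(v)} and suppose 1−s ≤ (e^{f(v)}/e^{f(w)})·(e^{f̃(w)}/e^{f̃(v)}) ≤ 1+s with 0 ≤ s ≤ 1, and ℓ² > 0, and that each of the three terms α_v e^{2f(v)}, α_w e^{2f(w)}, 2η e^{f(v)+f(w)} is nonnegative. Then H(v)²·ℓ²·(1−3s) ≤ ℓ̃² ≤ H(v)²·ℓ²·(1+3s). -/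
open Real

lemma scalar_bound (A B C r s : ℝ) (hA : 0 ≤ A) (hB : 0 ≤ B) (hC : 0 ≤ C)
    (hs0 : 0 ≤ s) (hs1 : s ≤ 1) (hlo : 1 - s ≤ r) (hhi : r ≤ 1 + s) :
    (A + B + C) * (1 - 3 * s) ≤ A + B * r ^ 2 + C * r ∧
      A + B * r ^ 2 + C * r ≤ (A + B + C) * (1 + 3 * s) := by
  constructor
  · nlinarith [mul_nonneg hB (mul_nonneg hs0 hs0), mul_nonneg hA hs0,
      mul_nonneg hC hs0, mul_nonneg hB (sub_nonneg.2 hlo),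
      mul_nonneg (mul_nonneg hB (sub_nonneg.2 hlo)) (sub_nonneg.2 hlo)]
  · nlinarith [mul_nonneg hA hs0, mul_nonneg hC hs0,
      mul_nonneg hB (mul_nonneg hs0 (sub_nonneg.2 hs1)),
      mul_nonneg (mul_nonneg hB (sub_nonneg.2 hhi)) (sub_nonneg.2 hhi),
      mul_nonneg hB (sub_nonneg.2 hhi)]

/-- Edge length comparison across a discrete conformal map (Lemma 5.1):
if the LDCR-type ratio bound holds across the edge, then
`H(v)²·ℓ²·(1−3s) ≤ ℓ̃² ≤ H(v)²·ℓ²·(1+3s)`. -/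
theorem edge_length_comparison
    (αv αw η fv fw ftv ftw s : ℝ)
    (hs0 : 0 ≤ s) (hs1 : s ≤ 1)
    (hαv : 0 ≤ αv * exp (2 * fv))
    (hαw : 0 ≤ αw * exp (2 * fw))
    (hη : 0 ≤ 2 * η * exp (fv + fw))
    (hℓpos : 0 < αv * exp (2 * fv) + αw * exp (2 * fw) + 2 * η * exp (fv + fw))
    (hldcr_lo : 1 - s ≤ (exp fv / exp fw) * (exp ftw / exp ftv))
    (hldcr_hi : (exp fv / exp fw) * (exp ftw / exp ftv) ≤ 1 + s) :
    (exp ftv / exp fv) ^ 2 *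
        (αv * exp (2 * fv) + αw * exp (2 * fw) + 2 * η * exp (fv + fw)) * (1 - 3 * s)
      ≤ αv * exp (2 * ftv) + αw * exp (2 * ftw) + 2 * η * exp (ftv + ftw) ∧
    αv * exp (2 * ftv) + αw * exp (2 * ftw) + 2 * η * exp (ftv + ftw)
      ≤ (exp ftv / exp fv) ^ 2 *
        (αv * exp (2 * fv) + αw * exp (2 * fw) + 2 * η * exp (fv + fw)) * (1 + 3 * s) := by
  set H := exp ftv / exp fv with hH
  set r := (exp fv / exp fw) * (exp ftw / exp ftv) with hr
  have hH2 : 0 ≤ H ^ 2 := sq_nonneg H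
  have e1 : αv * exp (2 * ftv) = H ^ 2 * (αv * exp (2 * fv)) := by
    rw [hH]; simp only [two_mul, exp_add]; field_simp
  have e2 : αw * exp (2 * ftw) = H ^ 2 * r ^ 2 * (αw * exp (2 * fw)) := by
    rw [hH, hr]; simp only [two_mul, exp_add]; field_simp
  have e3 : 2 * η * exp (ftv + ftw) = H ^ 2 * r * (2 * η * exp (fv + fw)) := by
    rw [hH, hr]; simp only [two_mul, exp_add]; field_simp
  obtain ⟨hlo, hhi⟩ := scalar_bound (αv * exp (2 * fv)) (αw * exp (2 * fw))
    (2 * η * exp (fv + fw)) r s hαv hαw hη hs0 hs1 hldcr_lo hldcr_hi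
  constructor
  · rw [e1, e2, e3]
    calc H ^ 2 * (αv * exp (2 * fv) + αw * exp (2 * fw) + 2 * η * exp (fv + fw)) * (1 - 3 * s)
        = H ^ 2 * ((αv * exp (2 * fv) + αw * exp (2 * fw) + 2 * η * exp (fv + fw)) * (1 - 3 * s)) := by ring
      _ ≤ H ^ 2 * (αv * exp (2 * fv) + αw * exp (2 * fw) * r ^ 2 + 2 * η * exp (fv + fw) * r) :=
          mul_le_mul_of_nonneg_left hlo hH2
      _ = H ^ 2 * (αv * exp (2 * fv)) + H ^ 2 * r ^ 2 * (αw * exp (2 * fw)) + H ^ 2 * r * (2 * η * exp (fv + fw)) := by ring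
  · rw [e1, e2, e3]
    calc H ^ 2 * (αv * exp (2 * fv)) + H ^ 2 * r ^ 2 * (αw * exp (2 * fw)) + H ^ 2 * r * (2 * η * exp (fv + fw))
        = H ^ 2 * (αv * exp (2 * fv) + αw * exp (2 * fw) * r ^ 2 + 2 * η * exp (fv + fw) * r) := by ring
      _ ≤ H ^ 2 * ((αv * exp (2 * fv) + αw * exp (2 * fw) + 2 * η * exp (fv + fw)) * (1 + 3 * s)) :=
          mul_le_mul_of_nonneg_left hhi hH2
      _ = H ^ 2 * (αv * exp (2 * fv) + αw * exp (2 * fw) + 2 * η * exp (fv + fw)) * (1 + 3 * s) := by ring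
end

section
/- Let H₀, H₁, H₂ > 0 satisfy |H_i² − H₀²| ≤ 3s·H₀² for i = 1,2, and consider the affine function e^F(λ¹,λ²) = H₀² + λ¹(H₁²−H₀²) + λ²(H₂²−H₀²) on a Euclidean triangle with all edge lengths ≤ ε and area A ≥ ϑε²/2 (ϑ > 0). Then the g^Δ-norm of the differential satisfies |de^F|²_{g^Δ} ≤ 36 s² H₀⁴ / (ϑ² ε²). -/
open Real

/-!
The numerator is the quadratic form of the inverse metric (without the factor `1/(4A²)`), and
`|cos φ| ≤ 1` bounds it by `(|a| ℓ₀₂ + |b| ℓ₀₁)² ≤ (2 · 3sH₀² · ε)²`, where `a`, `b` are the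
coefficients of `de^F`. Fullness bounds the denominator below: `4A² ≥ ϑ²ε⁴`.
-/

lemma sq_mul_add_sq_mul_sub_le_sq (a b x y c : ℝ) (hx : 0 ≤ x) (hy : 0 ≤ y) (hc : |c| ≤ 1) :
    a ^ 2 * y ^ 2 + b ^ 2 * x ^ 2 - 2 * a * b * (x * y * c) ≤ (|a| * y + |b| * x) ^ 2 := by
  have hcross : |a * b * (x * y * c)| ≤ |a| * |b| * (x * y) := by
    rw [abs_mul, abs_mul, abs_mul, abs_mul, abs_of_nonneg hx, abs_of_nonneg hy]
    exact mul_le_mul_of_nonneg_left (mul_le_of_le_one_right (by positivity) hc) (by positivity)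
  nlinarith [neg_abs_le (a * b * (x * y * c)), sq_abs a, sq_abs b]

lemma abs_mul_add_abs_mul_le (a b x y M ε : ℝ) (ha : |a| ≤ M) (hb : |b| ≤ M)
    (hx : 0 ≤ x) (hy : 0 ≤ y) (hxε : x ≤ ε) (hyε : y ≤ ε) :
    |a| * y + |b| * x ≤ 2 * M * ε := by
  have hM : 0 ≤ M := (abs_nonneg a).trans ha
  nlinarith [mul_le_mul ha hyε hy hM, mul_le_mul hb hxε hx hM]

lemma sq_mul_pow_four_le_four_mul_sq (ϑ ε A : ℝ) (hϑ : 0 ≤ ϑ) (hA : ϑ * ε ^ 2 / 2 ≤ A) :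
    ϑ ^ 2 * ε ^ 4 ≤ 4 * A ^ 2 := by
  have := pow_le_pow_left₀ (by positivity) hA 2
  nlinarith

theorem deF_norm_bound_general (ℓ01 ℓ02 φ A ϑ ε s : ℝ) (H0 H1 H2 : ℝ)
    (hϑ : 0 < ϑ)
    (h01pos : 0 < ℓ01) (h02pos : 0 < ℓ02)
    (h01 : ℓ01 ≤ ε) (h02 : ℓ02 ≤ ε)
    (hAfull : ϑ * ε ^ 2 / 2 ≤ A)
    (hclose1 : |H1 ^ 2 - H0 ^ 2| ≤ 3 * s * H0 ^ 2)
    (hclose2 : |H2 ^ 2 - H0 ^ 2| ≤ 3 * s * H0 ^ 2) :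
    ((H1 ^ 2 - H0 ^ 2) ^ 2 * ℓ02 ^ 2 + (H2 ^ 2 - H0 ^ 2) ^ 2 * ℓ01 ^ 2
        - 2 * (H1 ^ 2 - H0 ^ 2) * (H2 ^ 2 - H0 ^ 2) * (ℓ01 * ℓ02 * Real.cos φ))
        / (4 * A ^ 2)
      ≤ 36 * s ^ 2 * H0 ^ 4 / (ϑ ^ 2 * ε ^ 2) := by
  have hε : 0 < ε := h01pos.trans_le h01
  have hsum := abs_mul_add_abs_mul_le _ _ _ _ _ _ hclose1 hclose2 h01pos.le h02pos.le h01 h02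
  have hnum := (sq_mul_add_sq_mul_sub_le_sq (H1 ^ 2 - H0 ^ 2) (H2 ^ 2 - H0 ^ 2) ℓ01 ℓ02 _
    h01pos.le h02pos.le (abs_cos_le_one φ)).trans
      (pow_le_pow_left₀ (by positivity) hsum 2)
  have hden := sq_mul_pow_four_le_four_mul_sq ϑ ε A hϑ.le hAfull
  calc _ ≤ (2 * (3 * s * H0 ^ 2) * ε) ^ 2 / (ϑ ^ 2 * ε ^ 4) :=
        div_le_div₀ (by positivity) hnum (by positivity) hden
    _ = 36 * s ^ 2 * H0 ^ 4 / (ϑ ^ 2 * ε ^ 2) := by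
        field_simp
        ring

/-- Lemma 6.8 (gradient bound for the interpolated ratio function): on a
`(ϑ,ε)`-full Euclidean triangle (edge lengths `≤ ε`, area `A ≥ ϑε²/2`), the
`g^Δ`-norm squared of the differential of the affine function
`e^F(λ¹,λ²) = H₀² + λ¹(H₁²−H₀²) + λ²(H₂²−H₀²)`, computed via the inverse metric
`(1/(4A²))·[[ℓ₀₂², −ℓ₀₁ℓ₀₂cos φ],[−ℓ₀₁ℓ₀₂cos φ, ℓ₀₁²]]`, is at most
`36 s² H₀⁴ / (ϑ² ε²)`. -/
theorem deF_norm_bound (ℓ01 ℓ02 φ A ϑ ε s : ℝ) (H0 H1 H2 : ℝ)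
    (hϑ : 0 < ϑ) (hε : 0 < ε) (hs : 0 ≤ s)
    (h01pos : 0 < ℓ01) (h02pos : 0 < ℓ02)
    (h01 : ℓ01 ≤ ε) (h02 : ℓ02 ≤ ε)
    (hA : A = (1 / 2) * ℓ01 * ℓ02 * Real.sin φ)
    (hAfull : ϑ * ε ^ 2 / 2 ≤ A)
    (hH0 : 0 < H0) (hH1 : 0 < H1) (hH2 : 0 < H2)
    (hclose1 : |H1 ^ 2 - H0 ^ 2| ≤ 3 * s * H0 ^ 2)
    (hclose2 : |H2 ^ 2 - H0 ^ 2| ≤ 3 * s * H0 ^ 2) :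
    ((H1 ^ 2 - H0 ^ 2) ^ 2 * ℓ02 ^ 2 + (H2 ^ 2 - H0 ^ 2) ^ 2 * ℓ01 ^ 2
        - 2 * (H1 ^ 2 - H0 ^ 2) * (H2 ^ 2 - H0 ^ 2) * (ℓ01 * ℓ02 * Real.cos φ))
        / (4 * A ^ 2)
      ≤ 36 * s ^ 2 * H0 ^ 4 / (ϑ ^ 2 * ε ^ 2) :=
  deF_norm_bound_general ℓ01 ℓ02 φ A ϑ ε s H0 H1 H2 hϑ h01pos h02pos h01 h02 hAfull hclose1 hclose2
end

section
/- Let p₀,…,p_n ∈ ℝ^m be vertices of a (ϑ,ε)-full Euclidean n-simplex and let g^Δ be the Gram matrix g^Δ_{ij} = ⟨p_i−p₀, p_j−p₀⟩. Then every eigenvalue λ_k of g^Δ satisfies ϑ ε n^{1−n} ≤ √λ_k ≤ ε n. -/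
open MeasureTheory Set Finset

/-- the "sorted cube" region for a permutation σ -/
def sortedCube (n : ℕ) (σ : Equiv.Perm (Fin n)) : Set (Fin n → ℝ) :=
  {y | (∀ i, 0 ≤ y i ∧ y i ≤ 1) ∧ StrictMono (y ∘ σ)}

lemma measurableSet_sortedCube (n : ℕ) (σ : Equiv.Perm (Fin n)) :
    MeasurableSet (sortedCube n σ) := by
  have h1 : MeasurableSet {y : Fin n → ℝ | ∀ i, 0 ≤ y i ∧ y i ≤ 1} := by
    rw [show {y : Fin n → ℝ | ∀ i, 0 ≤ y i ∧ y i ≤ 1} = ⋂ i, {y | 0 ≤ y i ∧ y i ≤ 1} by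
      ext y; simp]
    exact MeasurableSet.iInter fun i =>
      ((measurableSet_le measurable_const (measurable_pi_apply i)).inter
        (measurableSet_le (measurable_pi_apply i) measurable_const))
  have h2 : MeasurableSet {y : Fin n → ℝ | StrictMono (y ∘ σ)} := by
    rw [show {y : Fin n → ℝ | StrictMono (y ∘ σ)}
        = ⋂ (i) (j) (_ : i < j), {y | y (σ i) < y (σ j)} by
      ext y; simp [StrictMono]]
    exact MeasurableSet.iInter fun i => MeasurableSet.iInter fun j =>
      MeasurableSet.iInter fun _ =>
        measurableSet_lt (measurable_pi_apply _) (measurable_pi_apply _)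
  exact h1.inter h2

lemma sortedCube_disjoint (n : ℕ) : Function.Injective (fun σ => sortedCube n σ) ∨ True := Or.inr trivial

lemma volume_sortedCube (n : ℕ) (σ : Equiv.Perm (Fin n)) :
    volume (sortedCube n σ) = volume (sortedCube n 1) := by
  have hmp := MeasureTheory.volume_measurePreserving_piCongrLeft (fun _ : Fin n => ℝ) σ.symm
  have hco : ∀ y : Fin n → ℝ, (MeasurableEquiv.piCongrLeft (fun _ : Fin n => ℝ) σ.symm) y
      = y ∘ σ := by
    intro y; funext i
    simp [MeasurableEquiv.piCongrLeft, Equiv.piCongrLeft]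
  have : sortedCube n σ
      = (MeasurableEquiv.piCongrLeft (fun _ : Fin n => ℝ) σ.symm) ⁻¹' (sortedCube n 1) := by
    ext y
    simp only [Set.mem_preimage, hco, sortedCube, Set.mem_setOf_eq]
    constructor
    · rintro ⟨hc, hs⟩
      exact ⟨fun i => hc (σ i), by simpa using hs⟩
    · rintro ⟨hc, hs⟩
      refine ⟨fun i => by simpa using hc (σ.symm i), by simpa using hs⟩
  rw [this, hmp.measure_preimage (measurableSet_sortedCube n 1).nullMeasurableSet]

lemma sortedCube_pairwise_disjoint (n : ℕ) :
    (Set.univ : Set (Equiv.Perm (Fin n))).PairwiseDisjoint (sortedCube n) := by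
  intro σ _ τ _ hst
  refine Set.disjoint_left.2 fun y hyσ hyτ => hst ?_
  obtain ⟨-, hσ⟩ := hyσ
  obtain ⟨-, hτ⟩ := hyτ
  have hπ : StrictMono (⇑(σ.trans τ.symm) : Fin n → Fin n) := by
    intro a b hab
    have h1 : (y ∘ τ) ((σ.trans τ.symm) a) < (y ∘ τ) ((σ.trans τ.symm) b) := by
      simpa using hσ hab
    exact hτ.lt_iff_lt.1 h1
  haveI : WellFoundedLT (Fin n) := inferInstance
  have hid : ⇑(σ.trans τ.symm) = id :=
    (hπ.range_inj strictMono_id).1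
      (by simp [Set.range_id, Set.range_eq_univ.2 (σ.trans τ.symm).surjective])
  ext x
  have hx : τ.symm (σ x) = x := congrFun hid x
  exact congrArg Fin.val ((Equiv.symm_apply_eq τ).1 hx)

lemma volume_sortedCube_le (n : ℕ) :
    (n.factorial : ENNReal) * volume (sortedCube n 1) ≤ 1 := by
  classical
  have hdisj : ((Finset.univ : Finset (Equiv.Perm (Fin n))) : Set (Equiv.Perm (Fin n))).PairwiseDisjoint
      (sortedCube n) := by simpa using sortedCube_pairwise_disjoint n
  have hsum : ∑ σ : Equiv.Perm (Fin n), volume (sortedCube n σ)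
      = volume (⋃ σ ∈ (Finset.univ : Finset (Equiv.Perm (Fin n))), sortedCube n σ) :=
    (measure_biUnion_finset hdisj fun σ _ => measurableSet_sortedCube n σ).symm
  have hsub : (⋃ σ ∈ (Finset.univ : Finset (Equiv.Perm (Fin n))), sortedCube n σ)
      ⊆ Set.univ.pi fun _ : Fin n => Set.Icc (0:ℝ) 1 := by
    intro y hy
    simp only [Set.mem_iUnion] at hy
    obtain ⟨σ, -, hc, -⟩ := hy
    intro i _
    exact ⟨(hc i).1, (hc i).2⟩
  have hcube : volume (Set.univ.pi fun _ : Fin n => Set.Icc (0:ℝ) 1) = 1 := by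
    rw [volume_pi_pi]
    simp [Real.volume_Icc]
  calc (n.factorial : ENNReal) * volume (sortedCube n 1)
      = ∑ _σ : Equiv.Perm (Fin n), volume (sortedCube n 1) := by
        simp [Finset.sum_const, Fintype.card_perm]
    _ = ∑ σ : Equiv.Perm (Fin n), volume (sortedCube n σ) := by
        exact Finset.sum_congr rfl fun σ _ => (volume_sortedCube n σ).symm
    _ ≤ 1 := by rw [hsum, ← hcube]; exact measure_mono hsub

/-- the diagonal hyperplanes are null -/
lemma volume_eqDiag_null (n : ℕ) (i j : Fin n) (hij : i ≠ j) :
    volume {y : Fin n → ℝ | y i = y j} = 0 := by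
  set f : (Fin n → ℝ) →ₗ[ℝ] ℝ := (LinearMap.proj i : (Fin n → ℝ) →ₗ[ℝ] ℝ) - (LinearMap.proj j : (Fin n → ℝ) →ₗ[ℝ] ℝ) with hf
  have hker : {y : Fin n → ℝ | y i = y j} = (LinearMap.ker f : Set (Fin n → ℝ)) := by
    ext y
    simp only [LinearMap.mem_ker, SetLike.mem_coe, Set.mem_setOf_eq, hf,
      LinearMap.sub_apply, LinearMap.proj_apply, sub_eq_zero]
  rw [hker]
  apply Measure.addHaar_submodule
  intro htop
  have h1 : f (Pi.single i 1) = 0 := LinearMap.mem_ker.1 (htop ▸ Submodule.mem_top)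
  simp only [hf, LinearMap.sub_apply, LinearMap.proj_apply, Pi.single_apply,
    if_pos rfl, if_neg hij.symm, sub_zero] at h1
  exact one_ne_zero h1

lemma volume_monotoneRegion_le (n : ℕ) :
    volume {y : Fin n → ℝ | (∀ i, 0 ≤ y i ∧ y i ≤ 1) ∧ Monotone y}
      ≤ (n.factorial : ENNReal)⁻¹ := by
  set T := {y : Fin n → ℝ | (∀ i, 0 ≤ y i ∧ y i ≤ 1) ∧ Monotone y}
  set N := ⋃ (i : Fin n) (j : Fin n) (_ : i ≠ j), {y : Fin n → ℝ | y i = y j}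
  have hN : volume N = 0 := by
    refine measure_iUnion_null fun i => measure_iUnion_null fun j => measure_iUnion_null ?_
    intro hij
    exact volume_eqDiag_null n i j hij
  have hsub : T ⊆ sortedCube n 1 ∪ N := by
    intro y ⟨hc, hm⟩
    by_cases hy : y ∈ N
    · exact Or.inr hy
    · left
      refine ⟨hc, ?_⟩
      intro a b hab
      simp only [Equiv.Perm.coe_one, Function.comp_id, Function.comp_apply, id_eq]
      rcases lt_or_eq_of_le (hm hab.le) with h | h
      · exact h
      · exact absurd h (by
          intro he
          exact hy (Set.mem_iUnion.2 ⟨a, Set.mem_iUnion.2 ⟨b, Set.mem_iUnion.2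
            ⟨hab.ne, he⟩⟩⟩))
  have h1 : volume T ≤ volume (sortedCube n 1) := by
    calc volume T ≤ volume (sortedCube n 1 ∪ N) := measure_mono hsub
      _ ≤ volume (sortedCube n 1) + volume N := measure_union_le _ _
      _ = volume (sortedCube n 1) := by rw [hN, add_zero]
  have h2 := volume_sortedCube_le n
  have hfac : (n.factorial : ENNReal) ≠ 0 := by
    simp [Nat.factorial_ne_zero]
  have hfact : (n.factorial : ENNReal) ≠ ⊤ := by simp
  calc volume T ≤ volume (sortedCube n 1) := h1
    _ = (n.factorial : ENNReal)⁻¹ * ((n.factorial : ENNReal) * volume (sortedCube n 1)) := by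
        rw [← mul_assoc, ENNReal.inv_mul_cancel hfac hfact, one_mul]
    _ ≤ (n.factorial : ENNReal)⁻¹ * 1 := by gcongr
    _ = (n.factorial : ENNReal)⁻¹ := mul_one _

lemma volume_stdSimplexSet_le (n : ℕ) :
    volume {x : Fin n → ℝ | (∀ i, 0 ≤ x i) ∧ ∑ i, x i ≤ 1} ≤ (n.factorial : ENNReal)⁻¹ := by
  classical
  set S := {x : Fin n → ℝ | (∀ i, 0 ≤ x i) ∧ ∑ i, x i ≤ 1}
  set B : Matrix (Fin n) (Fin n) ℝ := Matrix.of fun i j => if j ≤ i then 1 else 0 with hB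
  set M : (Fin n → ℝ) →ₗ[ℝ] (Fin n → ℝ) := Matrix.toLin' B with hM
  have hdetB : B.det = 1 := by
    have htri : B.BlockTriangular OrderDual.toDual := by
      intro i j hij
      simp only [hB, Matrix.of_apply]
      rw [if_neg]
      exact not_le_of_gt hij
    rw [Matrix.det_of_lowerTriangular B htri]
    simp [hB]
  have hdetM : LinearMap.det M = 1 := by rw [hM, LinearMap.det_toLin']; exact hdetB
  have hMx : ∀ (x : Fin n → ℝ) (i : Fin n),
      M x i = ∑ j ∈ Finset.univ.filter (fun j => j ≤ i), x j := by
    intro x i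
    rw [hM]
    simp only [Matrix.toLin'_apply, Matrix.mulVec, dotProduct, hB, Matrix.of_apply]
    rw [Finset.sum_filter]
    exact Finset.sum_congr rfl fun j _ => by split <;> simp
  have himg : M '' S ⊆ {y : Fin n → ℝ | (∀ i, 0 ≤ y i ∧ y i ≤ 1) ∧ Monotone y} := by
    rintro _ ⟨x, ⟨hx0, hx1⟩, rfl⟩
    refine ⟨fun i => ⟨?_, ?_⟩, ?_⟩
    · rw [hMx]; exact Finset.sum_nonneg fun j _ => hx0 j
    · rw [hMx]
      refine le_trans (Finset.sum_le_sum_of_subset_of_nonneg (Finset.filter_subset _ _)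
        fun j _ _ => hx0 j) hx1
    · intro a b hab
      rw [hMx, hMx]
      refine Finset.sum_le_sum_of_subset_of_nonneg ?_ fun j _ _ => hx0 j
      intro j hj
      simp only [Finset.mem_filter, Finset.mem_univ, true_and] at hj ⊢
      exact hj.trans hab
  have hvol : volume (M '' S) = volume S := by
    rw [Measure.addHaar_image_linearMap, hdetM]
    simp
  calc volume S = volume (M '' S) := hvol.symm
    _ ≤ volume {y : Fin n → ℝ | (∀ i, 0 ≤ y i ∧ y i ≤ 1) ∧ Monotone y} := measure_mono himg
    _ ≤ (n.factorial : ENNReal)⁻¹ := volume_monotoneRegion_le n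

lemma gram_quadform_eq {n : ℕ} (a : Fin n → EuclideanSpace ℝ (Fin n))
    (G : Matrix (Fin n) (Fin n) ℝ) (hG : ∀ i j, G i j = (inner ℝ (a i) (a j) : ℝ))
    (w : Fin n → ℝ) :
    dotProduct w (G.mulVec w) = ‖∑ i, w i • a i‖ ^ 2 := by
  have h1 : (inner ℝ (∑ i, w i • a i) (∑ j, w j • a j) : ℝ)
      = ∑ i, ∑ j, w i * (w j * (inner ℝ (a i) (a j) : ℝ)) := by
    rw [sum_inner]
    refine Finset.sum_congr rfl fun i _ => ?_
    rw [real_inner_smul_left, inner_sum, Finset.mul_sum]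
    exact Finset.sum_congr rfl fun j _ => by rw [real_inner_smul_right]
  rw [← real_inner_self_eq_norm_sq, h1]
  simp only [dotProduct, Matrix.mulVec, Finset.mul_sum]
  exact Finset.sum_congr rfl fun i _ => Finset.sum_congr rfl fun j _ => by
    rw [hG]; ring

lemma gram_eig_nonneg_and_le {n : ℕ} {ε : ℝ} (hε : 0 < ε)
    (a : Fin n → EuclideanSpace ℝ (Fin n)) (ha : ∀ i, ‖a i‖ ≤ ε)
    (G : Matrix (Fin n) (Fin n) ℝ) (hG : ∀ i j, G i j = (inner ℝ (a i) (a j) : ℝ))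
    (μ : ℝ) (w : Fin n → ℝ) (hw : w ≠ 0) (h : G.mulVec w = μ • w) :
    0 ≤ μ ∧ μ ≤ n * ε ^ 2 := by
  classical
  have hq : dotProduct w (G.mulVec w) = ‖∑ i, w i • a i‖ ^ 2 := gram_quadform_eq a G hG w
  have hl : dotProduct w (G.mulVec w) = μ * ∑ i, w i ^ 2 := by
    rw [h]
    simp only [dotProduct, Pi.smul_apply, smul_eq_mul, Finset.mul_sum]
    exact Finset.sum_congr rfl fun i _ => by ring
  have hw2 : 0 < ∑ i, w i ^ 2 := by
    obtain ⟨i0, hi0⟩ := Function.ne_iff.1 hw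
    refine Finset.sum_pos' (fun i _ => sq_nonneg _) ⟨i0, Finset.mem_univ _, ?_⟩
    have : w i0 ≠ 0 := hi0
    positivity
  have hnonneg : 0 ≤ μ := by
    have h0 : 0 ≤ μ * ∑ i, w i ^ 2 := by rw [← hl, hq]; positivity
    nlinarith [h0, hw2]
  refine ⟨hnonneg, ?_⟩
  have hnorm : ‖∑ i, w i • a i‖ ≤ ε * ∑ i, |w i| := by
    calc ‖∑ i, w i • a i‖ ≤ ∑ i, ‖w i • a i‖ := norm_sum_le _ _
      _ = ∑ i, |w i| * ‖a i‖ := by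
          exact Finset.sum_congr rfl fun i _ => by rw [norm_smul, Real.norm_eq_abs]
      _ ≤ ∑ i, |w i| * ε := Finset.sum_le_sum fun i _ =>
          mul_le_mul_of_nonneg_left (ha i) (abs_nonneg _)
      _ = ε * ∑ i, |w i| := by rw [← Finset.sum_mul]; ring
  have hcs : (∑ i, |w i|) ^ 2 ≤ (n : ℝ) * ∑ i, w i ^ 2 := by
    have := sq_sum_le_card_mul_sum_sq (s := (Finset.univ : Finset (Fin n)))
      (f := fun i => |w i|)
    simpa [sq_abs] using this
  have hkey : μ * ∑ i, w i ^ 2 ≤ (n : ℝ) * ε ^ 2 * ∑ i, w i ^ 2 := by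
    rw [← hl, hq]
    calc ‖∑ i, w i • a i‖ ^ 2 ≤ (ε * ∑ i, |w i|) ^ 2 := by
          apply sq_le_sq' _ hnorm
          exact le_trans (neg_nonpos.2 (by positivity)) (norm_nonneg _)
      _ = ε ^ 2 * (∑ i, |w i|) ^ 2 := by ring
      _ ≤ ε ^ 2 * ((n : ℝ) * ∑ i, w i ^ 2) := by
          exact mul_le_mul_of_nonneg_left hcs (by positivity)
      _ = (n : ℝ) * ε ^ 2 * ∑ i, w i ^ 2 := by ring
  exact le_of_mul_le_mul_right hkey hw2

lemma exists_eigenvalue_index {n : ℕ} (G : Matrix (Fin n) (Fin n) ℝ)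
    (hH : G.IsHermitian) (lam : ℝ) (v : Fin n → ℝ) (hv : v ≠ 0)
    (heig : G.mulVec v = lam • v) : ∃ k, hH.eigenvalues k = lam := by
  classical
  have hdet0 : (G - lam • 1).det = 0 := Matrix.exists_mulVec_eq_zero_iff.1
    ⟨v, hv, by rw [Matrix.sub_mulVec, Matrix.smul_mulVec, Matrix.one_mulVec, heig,
      sub_self]⟩
  set U := (Matrix.IsHermitian.eigenvectorUnitary hH : Matrix (Fin n) (Fin n) ℝ) with hU
  have hUU : U * star U = 1 := Matrix.mem_unitaryGroup_iff.mp
    (Matrix.IsHermitian.eigenvectorUnitary hH).2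
  have hGs := hH.spectral_theorem.trans (Unitary.conjStarAlgAut_apply _ _)
  have hsub : G - lam • 1
      = U * (Matrix.diagonal (RCLike.ofReal ∘ hH.eigenvalues) - lam • 1) * star U := by
    rw [hU, Matrix.mul_sub, Matrix.sub_mul, ← hGs]
    congr 1
    rw [Matrix.mul_smul, Matrix.mul_one, Matrix.smul_mul, hUU]
  have hdiag : Matrix.diagonal (RCLike.ofReal ∘ hH.eigenvalues) - lam • (1 : Matrix (Fin n) (Fin n) ℝ)
      = Matrix.diagonal (fun i => hH.eigenvalues i - lam) := by
    ext i j
    by_cases h : i = j <;>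
      simp [Matrix.diagonal_apply, Matrix.one_apply, h, Matrix.sub_apply, Matrix.smul_apply,
        Function.comp]
  have hdetU : U.det * (star U).det = 1 := by rw [← Matrix.det_mul, hUU, Matrix.det_one]
  have hdet : (G - lam • 1).det = ∏ i, (hH.eigenvalues i - lam) := by
    rw [hsub, hdiag, Matrix.det_mul, Matrix.det_mul]
    calc U.det * (Matrix.diagonal fun i => hH.eigenvalues i - lam).det * (star U).det
        = U.det * (star U).det * (Matrix.diagonal fun i => hH.eigenvalues i - lam).det := by
          ring
      _ = ∏ i, (hH.eigenvalues i - lam) := by rw [hdetU, one_mul, Matrix.det_diagonal]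
  rw [hdet] at hdet0
  obtain ⟨k, -, hk⟩ := Finset.prod_eq_zero_iff.1 hdet0
  exact ⟨k, sub_eq_zero.1 hk⟩

lemma volume_hull_le {n : ℕ} (p : Fin (n + 1) → EuclideanSpace ℝ (Fin n))
    (A : Matrix (Fin n) (Fin n) ℝ) (hA : ∀ k i, A k i = (p i.succ - p 0) k) :
    volume (convexHull ℝ (Set.range p))
      ≤ ENNReal.ofReal |A.det| * (n.factorial : ENNReal)⁻¹ := by
  classical
  haveI : Measure.IsAddHaarMeasure (volume : Measure (EuclideanSpace ℝ (Fin n))) := by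
    rw [← (EuclideanSpace.basisFun (Fin n) ℝ).addHaar_eq_volume]
    infer_instance
  set SE : Set (EuclideanSpace ℝ (Fin n)) := {x | (∀ i, 0 ≤ x i) ∧ ∑ i, x i ≤ 1} with hSE
  set L : EuclideanSpace ℝ (Fin n) →ₗ[ℝ] EuclideanSpace ℝ (Fin n) := Matrix.toEuclideanLin A
    with hL
  have hSconv : Convex ℝ SE := by
    intro x hx y hy α β hα hβ hαβ
    refine ⟨fun i => ?_, ?_⟩
    · have : (α • x + β • y) i = α * x i + β * y i := rfl
      rw [this]
      exact add_nonneg (mul_nonneg hα (hx.1 i)) (mul_nonneg hβ (hy.1 i))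
    · have hs : ∑ i, (α • x + β • y) i = α * ∑ i, x i + β * ∑ i, y i := by
        rw [Finset.mul_sum, Finset.mul_sum, ← Finset.sum_add_distrib]
        exact Finset.sum_congr rfl fun i _ => rfl
      rw [hs]
      calc α * ∑ i, x i + β * ∑ i, y i ≤ α * 1 + β * 1 := by
            gcongr
            exacts [hx.2, hy.2]
        _ = 1 := by rw [mul_one, mul_one, hαβ]
  have hLsingle : ∀ i : Fin n, L (EuclideanSpace.single i (1:ℝ)) = p i.succ - p 0 := by
    intro i
    ext k
    have : L (EuclideanSpace.single i (1:ℝ)) k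
        = ∑ j, A k j * (EuclideanSpace.single i (1:ℝ)) j := rfl
    rw [this]
    simp only [EuclideanSpace.single_apply]
    rw [Finset.sum_eq_single i]
    · rw [if_pos rfl, mul_one, hA]
    · intro j _ hj; rw [if_neg hj, mul_zero]
    · intro h; exact absurd (Finset.mem_univ i) h
  have hhull : convexHull ℝ (Set.range p) ⊆ (fun z => p 0 + z) '' (L '' SE) := by
    apply convexHull_min
    · rintro _ ⟨j, rfl⟩
      induction j using Fin.cases with
      | zero =>
        refine ⟨L 0, ⟨0, ⟨fun i => le_refl _, by simp⟩, rfl⟩, ?_⟩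
        show p 0 + L 0 = p 0
        rw [map_zero, add_zero]
      | succ i =>
        refine ⟨L (EuclideanSpace.single i (1:ℝ)),
          ⟨EuclideanSpace.single i (1:ℝ), ⟨fun j => ?_, ?_⟩, rfl⟩, ?_⟩
        · rw [EuclideanSpace.single_apply]
          split <;> norm_num
        · simp [EuclideanSpace.single_apply]
        · show p 0 + L (EuclideanSpace.single i (1:ℝ)) = p i.succ
          rw [hLsingle]
          abel
    · exact (hSconv.linear_image L).translate (p 0)
  have hmeasS : MeasurableSet {x : Fin n → ℝ | (∀ i, 0 ≤ x i) ∧ ∑ i, x i ≤ 1} := by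
    rw [Set.setOf_and]
    refine MeasurableSet.inter ?_ ?_
    · rw [Set.setOf_forall]
      exact MeasurableSet.iInter fun i =>
        measurableSet_le measurable_const (measurable_pi_apply i)
    · exact measurableSet_le (Finset.measurable_sum _ fun i _ => measurable_pi_apply i)
        measurable_const
  have hvolSE : volume SE ≤ (n.factorial : ENNReal)⁻¹ := by
    have hpre : SE = (MeasurableEquiv.toLp 2 (Fin n → ℝ)).symm ⁻¹'
        {x : Fin n → ℝ | (∀ i, 0 ≤ x i) ∧ ∑ i, x i ≤ 1} := rfl
    rw [hpre, (EuclideanSpace.volume_preserving_symm_measurableEquiv_toLp (Fin n)).measure_preimage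
      hmeasS.nullMeasurableSet]
    exact volume_stdSimplexSet_le n
  have hdetL : LinearMap.det L = A.det := by
    have : L = (((WithLp.linearEquiv 2 ℝ (Fin n → ℝ)).symm :
          (Fin n → ℝ) ≃ₗ[ℝ] EuclideanSpace ℝ (Fin n)) :
          (Fin n → ℝ) →ₗ[ℝ] EuclideanSpace ℝ (Fin n)) ∘ₗ (Matrix.toLin' A) ∘ₗ
        (((WithLp.linearEquiv 2 ℝ (Fin n → ℝ)).symm :
          (Fin n → ℝ) ≃ₗ[ℝ] EuclideanSpace ℝ (Fin n)).symm :
          EuclideanSpace ℝ (Fin n) →ₗ[ℝ] (Fin n → ℝ)) := rfl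
    rw [this, LinearMap.det_conj, LinearMap.det_toLin']
  calc volume (convexHull ℝ (Set.range p))
      ≤ volume ((fun z => p 0 + z) '' (L '' SE)) := measure_mono hhull
    _ = volume (L '' SE) := by
        rw [Set.image_add_left, measure_preimage_add]
    _ = ENNReal.ofReal |LinearMap.det L| * volume SE :=
        Measure.addHaar_image_linearMap volume L SE
    _ ≤ ENNReal.ofReal |A.det| * (n.factorial : ENNReal)⁻¹ := by
        rw [hdetL]
        exact mul_le_mul_right hvolSE _


open MeasureTheory

/-- Lemma 8.1 (Lemma 3 of the barycentric paper): the eigenvalues `λ` of the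
Gram matrix `g^Δ_{ij} = ⟨pᵢ−p₀, pⱼ−p₀⟩` of a `(ϑ,ε)`-full Euclidean `n`-simplex
satisfy `ϑεn^{1−n} ≤ √λ ≤ εn`. -/
theorem gram_eigenvalue_bounds (n : ℕ) (hn : 0 < n) (ϑ ε : ℝ)
    (hϑ : 0 < ϑ) (hε : 0 < ε)
    (p : Fin (n + 1) → EuclideanSpace ℝ (Fin n))
    (hedge : ∀ i j, dist (p i) (p j) ≤ ε)
    (hfull : ϑ * ε ^ n ≤ (n.factorial : ℝ) *
      (volume (convexHull ℝ (Set.range p))).toReal)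
    (G : Matrix (Fin n) (Fin n) ℝ)
    (hG : ∀ i j, G i j = (inner ℝ (p i.succ - p 0) (p j.succ - p 0) : ℝ))
    (lam : ℝ) (v : Fin n → ℝ) (hv : v ≠ 0) (heig : G.mulVec v = lam • v) :
    ϑ * ε * (n : ℝ) ^ ((1 : ℤ) - n) ≤ Real.sqrt lam ∧ Real.sqrt lam ≤ ε * n := by
  classical
  set a : Fin n → EuclideanSpace ℝ (Fin n) := fun i => p i.succ - p 0 with ha
  have hGa : ∀ i j, G i j = (inner ℝ (a i) (a j) : ℝ) := hG
  have hanorm : ∀ i, ‖a i‖ ≤ ε := fun i => by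
    rw [ha, ← dist_eq_norm]; exact hedge _ _
  have hn1 : (1:ℝ) ≤ (n:ℝ) := by exact_mod_cast hn
  obtain ⟨hlam0, hlamle⟩ := gram_eig_nonneg_and_le hε a hanorm G hGa lam v hv heig
  have hupper : Real.sqrt lam ≤ ε * n := by
    have h1 : lam ≤ (ε * n) ^ 2 := by nlinarith [hlamle, hε.le, hn1]
    calc Real.sqrt lam ≤ Real.sqrt ((ε * n) ^ 2) := Real.sqrt_le_sqrt h1
      _ = ε * n := Real.sqrt_sq (by positivity)
  set A : Matrix (Fin n) (Fin n) ℝ := Matrix.of fun k i => a i k with hAdef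
  have hAk : ∀ k i, A k i = (p i.succ - p 0) k := fun k i => rfl
  have hdetA : ϑ * ε ^ n ≤ |A.det| := by
    have hv1 := volume_hull_le p A hAk
    have hne : ENNReal.ofReal |A.det| * (n.factorial : ENNReal)⁻¹ ≠ ⊤ :=
      ENNReal.mul_ne_top ENNReal.ofReal_ne_top (by simp [Nat.factorial_ne_zero])
    have htr : (volume (convexHull ℝ (Set.range p))).toReal
        ≤ |A.det| * ((n.factorial : ℝ))⁻¹ := by
      have h2 := ENNReal.toReal_mono hne hv1
      rwa [ENNReal.toReal_mul, ENNReal.toReal_ofReal (abs_nonneg _), ENNReal.toReal_inv,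
        ENNReal.toReal_natCast] at h2
    have hfacpos : (0:ℝ) < (n.factorial : ℝ) := by
      exact_mod_cast Nat.factorial_pos n
    calc ϑ * ε ^ n ≤ (n.factorial : ℝ) * (volume (convexHull ℝ (Set.range p))).toReal := hfull
      _ ≤ (n.factorial : ℝ) * (|A.det| * ((n.factorial : ℝ))⁻¹) :=
          mul_le_mul_of_nonneg_left htr hfacpos.le
      _ = |A.det| := by field_simp
  have hGAA : G = A.transpose * A := by
    ext i j
    rw [hGa]
    simp only [Matrix.mul_apply, Matrix.transpose_apply, hAdef, Matrix.of_apply,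
      PiLp.inner_apply, RCLike.inner_apply, conj_trivial, mul_comm]
  have hdetG : (ϑ * ε ^ n) ^ 2 ≤ G.det := by
    rw [hGAA, Matrix.det_mul, Matrix.det_transpose]
    calc (ϑ * ε ^ n) ^ 2 ≤ |A.det| ^ 2 := pow_le_pow_left₀ (by positivity) hdetA 2
      _ = A.det * A.det := by rw [sq_abs, sq]
  have hH : G.IsHermitian := by
    rw [Matrix.IsHermitian]
    ext i j
    rw [Matrix.conjTranspose_apply, hGa, hGa, star_trivial, real_inner_comm]
  obtain ⟨k0, hk0⟩ := exists_eigenvalue_index G hH lam v hv heig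
  have heigs : ∀ k, 0 ≤ hH.eigenvalues k ∧ hH.eigenvalues k ≤ n * ε ^ 2 := by
    intro k
    refine gram_eig_nonneg_and_le hε a hanorm G hGa _ _ ?_ (hH.mulVec_eigenvectorBasis k)
    intro hzero
    have hb : ‖hH.eigenvectorBasis k‖ = 1 := hH.eigenvectorBasis.orthonormal.1 k
    have : (hH.eigenvectorBasis k : EuclideanSpace ℝ (Fin n)) = 0 := by
      ext i; simpa using congrFun hzero i
    rw [this, norm_zero] at hb
    exact zero_ne_one hb
  have hprod : G.det = ∏ k, hH.eigenvalues k := by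
    have h3 := hH.det_eq_prod_eigenvalues
    simpa using h3
  set m := n - 1 with hm
  have hnm : n = m + 1 := (Nat.succ_pred_eq_of_pos hn).symm
  have hcard : (Finset.univ.erase k0).card = m := by
    rw [Finset.card_erase_of_mem (Finset.mem_univ _), Finset.card_univ, Fintype.card_fin]
  have hrest : ∏ k ∈ Finset.univ.erase k0, hH.eigenvalues k ≤ ((n:ℝ) * ε ^ 2) ^ m := by
    calc ∏ k ∈ Finset.univ.erase k0, hH.eigenvalues k
        ≤ ∏ _k ∈ Finset.univ.erase k0, ((n:ℝ) * ε ^ 2) :=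
          Finset.prod_le_prod (fun k _ => (heigs k).1) (fun k _ => (heigs k).2)
      _ = ((n:ℝ) * ε ^ 2) ^ m := by rw [Finset.prod_const, hcard]
  have hGdecomp : G.det = lam * ∏ k ∈ Finset.univ.erase k0, hH.eigenvalues k := by
    rw [hprod, ← hk0, Finset.mul_prod_erase _ _ (Finset.mem_univ k0)]
  have hc0 : (0:ℝ) < ((n:ℝ) * ε ^ 2) ^ m := by positivity
  have hkey : (ϑ * ε ^ n) ^ 2 ≤ lam * ((n:ℝ) * ε ^ 2) ^ m := by
    calc (ϑ * ε ^ n) ^ 2 ≤ G.det := hdetG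
      _ = lam * ∏ k ∈ Finset.univ.erase k0, hH.eigenvalues k := hGdecomp
      _ ≤ lam * ((n:ℝ) * ε ^ 2) ^ m := mul_le_mul_of_nonneg_left hrest hlam0
  have hnn : (1:ℝ) ≤ (n:ℝ) ^ m := one_le_pow₀ hn1
  have heq2 : (ϑ * ε * (((n:ℝ) ^ m)⁻¹)) ^ 2 * ((n:ℝ) * ε ^ 2) ^ m
      = (ϑ * ε ^ n) ^ 2 / (n:ℝ) ^ m := by
    have hne' : ((n:ℝ) ^ m) ≠ 0 := by positivity
    rw [show ((n:ℝ) * ε ^ 2) ^ m = (n:ℝ) ^ m * ε ^ (2 * m) by rw [mul_pow, ← pow_mul],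
      show ε ^ n = ε ^ m * ε by rw [hnm, pow_succ]]
    field_simp
    ring
  have h3 : (ϑ * ε * (((n:ℝ) ^ m)⁻¹)) ^ 2 * ((n:ℝ) * ε ^ 2) ^ m
      ≤ lam * ((n:ℝ) * ε ^ 2) ^ m := by
    rw [heq2]
    exact le_trans (div_le_self (by positivity) hnn) hkey
  have hlow : (ϑ * ε * (((n:ℝ) ^ m)⁻¹)) ^ 2 ≤ lam := le_of_mul_le_mul_right h3 hc0
  have hzpow : (n : ℝ) ^ ((1 : ℤ) - n) = ((n:ℝ) ^ m)⁻¹ := by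
    have : (1 : ℤ) - n = -(m : ℤ) := by
      rw [hnm]; push_cast; ring
    rw [this, zpow_neg, zpow_natCast]
  refine ⟨?_, hupper⟩
  rw [hzpow]
  exact (Real.le_sqrt (by positivity) hlam0).2 hlow
end
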